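/- arXiv:math/9403204 — 5 statements merged into one kernel-verified Lean document; each statement's English description precedes it below -/
import Mathlib

section
/- Let F be a finite free module over a commutative ring R, let a ∈ F (so a has exterior degree 1), let γ be a homogeneous element of the exterior algebra of the dual F* and b a homogeneous element of the exterior algebra of F. Then (a ⌟ γ) ⌟ b = a ∧ (γ ⌟ b) + (−1)^(1+deg γ) · γ ⌟ (a ∧ b), where ⌟ denotes the natural contraction action of ⋀F* on ⋀F (and of ⋀F on ⋀F*). -/
/-!
Contraction by `a ∈ F` is a graded derivation of `⋀ F*`, and contraction by `f ∈ F*` is a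
graded derivation of `⋀ F`; in particular `f ⌟ (a ∧ z) = f(a) z - a ∧ (f ⌟ z)`.
Writing a homogeneous `γ` of degree `j + 1` as a sum of products `f ∧ γ'`, the formula for
`γ` follows from the one for `γ'` by these two rules, by induction on `j`.
-/

open ExteriorAlgebra

noncomputable def extMap (R : Type*) [CommRing R] {M N : Type*} [AddCommGroup M] [AddCommGroup N]
    [Module R M] [Module R N] (f : M →ₗ[R] N) :
    ExteriorAlgebra R M →ₐ[R] ExteriorAlgebra R N :=
  ExteriorAlgebra.lift R ⟨(ExteriorAlgebra.ι R).comp f, fun m => by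
    simp [ExteriorAlgebra.ι_sq_zero (f m)]⟩

noncomputable def extContract (R : Type*) [CommRing R] {M : Type*} [AddCommGroup M] [Module R M] :
    ExteriorAlgebra R (Module.Dual R M) →ₐ[R] Module.End R (ExteriorAlgebra R M) :=
  ExteriorAlgebra.lift R ⟨(CliffordAlgebra.contractLeft (Q := (0 : QuadraticForm R M)) :
      Module.Dual R M →ₗ[R] Module.End R (ExteriorAlgebra R M)), fun d => by
    refine LinearMap.ext fun x => ?_
    rw [Module.End.mul_apply, LinearMap.zero_apply]
    exact CliffordAlgebra.contractLeft_contractLeft (Q := (0 : QuadraticForm R M)) (d := d) x⟩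

noncomputable def extContractD (R : Type*) [CommRing R] {M : Type*} [AddCommGroup M] [Module R M] :
    ExteriorAlgebra R M →ₐ[R] Module.End R (ExteriorAlgebra R (Module.Dual R M)) :=
  ExteriorAlgebra.lift R ⟨(CliffordAlgebra.contractLeft
      (Q := (0 : QuadraticForm R (Module.Dual R M))) :
      Module.Dual R (Module.Dual R M) →ₗ[R] _).comp (Module.Dual.eval R M), fun m => by
    refine LinearMap.ext fun x => ?_
    rw [Module.End.mul_apply, LinearMap.zero_apply, LinearMap.comp_apply]
    exact CliffordAlgebra.contractLeft_contractLeft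
      (Q := (0 : QuadraticForm R (Module.Dual R M))) (d := Module.Dual.eval R M m) x⟩

def extDeg (R : Type*) [CommRing R] {M : Type*} [AddCommGroup M] [Module R M] (i : ℕ)
    (x : ExteriorAlgebra R M) : Prop :=
  x ∈ (LinearMap.range (ExteriorAlgebra.ι R : M →ₗ[R] ExteriorAlgebra R M)) ^ i

section

variable {R M : Type*} [CommRing R] [AddCommGroup M] [Module R M]

theorem extContract_ι (f : Module.Dual R M) :
    extContract R (ι R f) = CliffordAlgebra.contractLeft (Q := (0 : QuadraticForm R M)) f :=
  ExteriorAlgebra.lift_ι_apply _ _ _ _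

theorem extContractD_ι (m : M) :
    extContractD R (ι R m) =
      CliffordAlgebra.contractLeft (Q := (0 : QuadraticForm R (Module.Dual R M)))
        (Module.Dual.eval R M m) :=
  ExteriorAlgebra.lift_ι_apply _ _ _ _

theorem extContractD_ι_ι_mul (m : M) (f : Module.Dual R M)
    (γ : ExteriorAlgebra R (Module.Dual R M)) :
    extContractD R (ι R m) (ι R f * γ) = f m • γ - ι R f * extContractD R (ι R m) γ := by
  rw [extContractD_ι]
  exact CliffordAlgebra.contractLeft_ι_mul _ _ _

theorem extContract_ι_mul_apply (f : Module.Dual R M) (δ : ExteriorAlgebra R (Module.Dual R M))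
    (z : ExteriorAlgebra R M) :
    extContract R (ι R f * δ) z =
      CliffordAlgebra.contractLeft (Q := (0 : QuadraticForm R M)) f (extContract R δ z) := by
  rw [map_mul, extContract_ι, Module.End.mul_apply]

end

theorem contraction_derivation_formula_general (R : Type*) [CommRing R]
    (F : Type*) [AddCommGroup F] [Module R F]
    (a : F) (γ : ExteriorAlgebra R (Module.Dual R F)) (b : ExteriorAlgebra R F)
    (j : ℕ) (hγ : extDeg R j γ) :
    extContract R (extContractD R (ExteriorAlgebra.ι R a) γ) b =
      ExteriorAlgebra.ι R a * extContract R γ b +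
        ((-1 : R) ^ (1 + j)) • extContract R γ (ExteriorAlgebra.ι R a * b) := by
  induction hγ using Submodule.pow_induction_on_left' with
  | algebraMap r =>
    simp [extContractD_ι]
  | add x y k _ _ hx hy =>
    simp only [map_add, LinearMap.add_apply, hx, hy, mul_add, smul_add]
    abel
  | mem_mul x hx k γ' _ ih =>
    obtain ⟨f, rfl⟩ := hx
    rw [extContractD_ι_ι_mul, map_sub, LinearMap.sub_apply, map_smul, LinearMap.smul_apply]
    simp only [extContract_ι_mul_apply]
    rw [ih, map_add, map_smul, CliffordAlgebra.contractLeft_ι_mul, Nat.succ_eq_add_one,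
      ← add_assoc, pow_succ, mul_neg_one, neg_smul]
    abel

/-- Proposition 1.2(a): for `a ∈ F` (degree 1), `γ` a homogeneous element of `⋀ F*` of
degree `j`, and `b` a homogeneous element of `⋀ F`, one has
`(a ⌟ γ) ⌟ b = a ∧ (γ ⌟ b) + (-1)^(1 + deg γ) • (γ ⌟ (a ∧ b))`. -/
theorem contraction_derivation_formula (R : Type*) [CommRing R]
    (F : Type*) [AddCommGroup F] [Module R F] [Module.Free R F] [Module.Finite R F]
    (a : F) (γ : ExteriorAlgebra R (Module.Dual R F)) (b : ExteriorAlgebra R F)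
    (j i : ℕ) (hγ : extDeg R j γ) (hb : extDeg R i b) :
    extContract R (extContractD R (ExteriorAlgebra.ι R a) γ) b =
      ExteriorAlgebra.ι R a * extContract R γ b +
        ((-1 : R) ^ (1 + j)) • extContract R γ (ExteriorAlgebra.ι R a * b) :=
  contraction_derivation_formula_general R F a γ b j hγ
end

section
/- Let F be a free R-module of rank n, let γ ∈ ⋀^n F* be a top-degree dual form, and let a, b be homogeneous elements of ⋀F. Then (a ⌟ γ) ⌟ b = (−1)^ν (b ⌟ γ) ⌟ a, where ν = (n − deg a)(n − deg b). -/
open ExteriorAlgebra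

/-!
A pairing `B : W →ₗ[R] Module.Dual R M` lets `⋀ W` act on `⋀ M`, written `e ⌟ x` below, by
extending `w ↦ B w ⌋ ·` multiplicatively, and `B.flip` lets `⋀ M` act on `⋀ W`. The two
contractions of the statement are the cases `B = LinearMap.id` and `B = LinearMap.id.flip`, so
every lemma serves both sides.

For `e` of degree `m` the action satisfies the graded Leibniz rule
`(v ⌋ e) ⌟ x = v ∧ (e ⌟ x) - (-1)^m e ⌟ (v ∧ x)`. Writing `a = v ∧ a'`, this rule reduces the
claim for `a` to the claims for `a'` against `b` and against `v ∧ b`; the latter is trivial when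
`deg b = n`, because `⋀^(n+1) F = 0`. The base case `deg a = 0` is the symmetry of the two scalar
pairings `⋀^k W × ⋀^k M → R`, which follows from the same rule by induction on `k`.
-/

namespace ExteriorAlgebra

variable {R M W : Type*} [CommRing R] [AddCommGroup M] [Module R M] [AddCommGroup W] [Module R W]

local infixl:70 " ⌋ " => CliffordAlgebra.contractLeft

theorem contractLeft_eq_zero_of_mem_exteriorPower_zero (d : Module.Dual R M)
    {x : ExteriorAlgebra R M} (hx : x ∈ ⋀[R]^0 M) : d ⌋ x = 0 := by
  rw [exteriorPower, pow_zero] at hx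
  obtain ⟨r, rfl⟩ := Submodule.mem_one.mp hx
  exact CliffordAlgebra.contractLeft_algebraMap _ _ r

theorem ι_mul_mem_exteriorPower (v : M) {k : ℕ} {x : ExteriorAlgebra R M}
    (hx : x ∈ ⋀[R]^k M) : ι R v * x ∈ ⋀[R]^(k + 1) M := by
  rw [exteriorPower, pow_succ']
  exact Submodule.mul_mem_mul (LinearMap.mem_range_self _ v) hx

theorem contractLeft_mem_exteriorPower (d : Module.Dual R M) {k : ℕ}
    {x : ExteriorAlgebra R M} (hx : x ∈ ⋀[R]^(k + 1) M) : d ⌋ x ∈ ⋀[R]^k M := by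
  rw [exteriorPower, pow_succ'] at hx
  induction hx using Submodule.mul_induction_on' with
  | mem_mul_mem m hm y hy =>
    obtain ⟨v, rfl⟩ := hm
    rw [CliffordAlgebra.contractLeft_ι_mul]
    refine sub_mem (Submodule.smul_mem _ _ hy) ?_
    cases k with
    | zero => rw [contractLeft_eq_zero_of_mem_exteriorPower_zero d hy, mul_zero]; exact zero_mem _
    | succ k => exact ι_mul_mem_exteriorPower v (contractLeft_mem_exteriorPower d hy)
  | add y z _ _ hy hz => rw [map_add]; exact add_mem hy hz

theorem ι_mul_comm_of_mem_exteriorPower {k : ℕ} {x : ExteriorAlgebra R M}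
    (hx : x ∈ ⋀[R]^k M) (v : M) : ι R v * x = (-1 : R) ^ k • (x * ι R v) := by
  induction hx using Submodule.pow_induction_on_left' with
  | algebraMap r => rw [pow_zero, one_smul, Algebra.commutes]
  | add x y i _ _ hx hy => rw [mul_add, add_mul, smul_add, hx, hy]
  | mem_mul m hm i x _ hx =>
    obtain ⟨w, rfl⟩ := hm
    rw [← mul_assoc, eq_neg_of_add_eq_zero_left (ι_add_mul_swap v w), neg_mul, mul_assoc, hx,
      mul_smul_comm, pow_succ, mul_neg_one, neg_smul, mul_assoc]

theorem exteriorPower_eq_bot_of_finrank_lt [Module.Free R M] [Module.Finite R M] {k : ℕ}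
    (hk : Module.finrank R M < k) : ⋀[R]^k M = ⊥ := by
  rcases subsingleton_or_nontrivial R with _ | _
  · have := Module.subsingleton R (ExteriorAlgebra R M)
    exact Submodule.eq_bot_of_subsingleton
  · have : IsEmpty (Set.powersetCard (Fin (Module.finrank R M)) k) :=
      ⟨fun s => hk.not_ge <| by
        simpa [Set.powersetCard.mem_iff.mp s.2] using Finset.card_le_univ s.1⟩
    exact Submodule.subsingleton_iff_eq_bot.mp
      ((Module.finBasis R M).exteriorPower k).repr.toEquiv.subsingleton

noncomputable def contractAlong (B : W →ₗ[R] Module.Dual R M) :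
    ExteriorAlgebra R W →ₐ[R] Module.End R (ExteriorAlgebra R M) :=
  lift R ⟨CliffordAlgebra.contractLeft ∘ₗ B, fun w =>
    LinearMap.ext fun x => CliffordAlgebra.contractLeft_contractLeft (B w) x⟩

variable (B : W →ₗ[R] Module.Dual R M)

theorem contractAlong_ι (w : W) : contractAlong B (ι R w) = CliffordAlgebra.contractLeft (B w) :=
  lift_ι_apply _ _ _ _

theorem contractAlong_ι_mul_apply (w : W) (e : ExteriorAlgebra R W) (x : ExteriorAlgebra R M) :
    contractAlong B (ι R w * e) x = B w ⌋ contractAlong B e x := by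
  rw [map_mul, Module.End.mul_apply, contractAlong_ι]

theorem contractAlong_algebraMap_apply (r : R) (x : ExteriorAlgebra R M) :
    contractAlong B (algebraMap R _ r) x = r • x := by
  rw [AlgHom.commutes, Module.algebraMap_end_apply]

theorem contractAlong_mem_exteriorPower {k j : ℕ} {e : ExteriorAlgebra R W} (he : e ∈ ⋀[R]^k W)
    {x : ExteriorAlgebra R M} (hx : x ∈ ⋀[R]^(k + j) M) : contractAlong B e x ∈ ⋀[R]^j M := by
  induction he using Submodule.pow_induction_on_left' generalizing j x with
  | algebraMap r =>
    rw [contractAlong_algebraMap_apply]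
    exact Submodule.smul_mem _ r (by simpa using hx)
  | add e₁ e₂ i _ _ h₁ h₂ =>
    rw [map_add, LinearMap.add_apply]
    exact add_mem (h₁ hx) (h₂ hx)
  | mem_mul w hw i e _ ih =>
    obtain ⟨w, rfl⟩ := hw
    rw [contractAlong_ι_mul_apply]
    exact contractLeft_mem_exteriorPower _ (ih (by rwa [Nat.succ_add_eq_add_succ] at hx))

theorem contractAlong_eq_zero_of_lt {k q : ℕ} {e : ExteriorAlgebra R W} (he : e ∈ ⋀[R]^k W)
    {x : ExteriorAlgebra R M} (hx : x ∈ ⋀[R]^q M) (hqk : q < k) : contractAlong B e x = 0 := by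
  induction he using Submodule.pow_induction_on_left' with
  | algebraMap r => exact absurd hqk (Nat.not_lt_zero q)
  | add e₁ e₂ i _ _ h₁ h₂ => rw [map_add, LinearMap.add_apply, h₁ hqk, h₂ hqk, add_zero]
  | mem_mul w hw i e he ih =>
    obtain ⟨w, rfl⟩ := hw
    rw [contractAlong_ι_mul_apply]
    rcases (Nat.lt_succ_iff.mp hqk).lt_or_eq with hqi | rfl
    · rw [ih hqi, map_zero]
    · exact contractLeft_eq_zero_of_mem_exteriorPower_zero _
        (contractAlong_mem_exteriorPower B he (j := 0) hx)

theorem contractAlong_contractLeft_flip_apply {m : ℕ} {e : ExteriorAlgebra R W}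
    (he : e ∈ ⋀[R]^m W) (v : M) (x : ExteriorAlgebra R M) :
    contractAlong B (B.flip v ⌋ e) x =
      ι R v * contractAlong B e x - (-1 : R) ^ m • contractAlong B e (ι R v * x) := by
  induction he using Submodule.pow_induction_on_left' generalizing x with
  | algebraMap r =>
    simp [CliffordAlgebra.contractLeft_algebraMap]
  | add e₁ e₂ i _ _ h₁ h₂ =>
    simp only [map_add, LinearMap.add_apply, h₁, h₂, mul_add, smul_add]
    abel
  | mem_mul w hw i e _ ih =>
    obtain ⟨w, rfl⟩ := hw
    simp only [CliffordAlgebra.contractLeft_ι_mul, LinearMap.flip_apply, map_sub, map_smul,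
      LinearMap.sub_apply, LinearMap.smul_apply, contractAlong_ι_mul_apply, ih, pow_succ]
    module

theorem contractAlong_apply_ι_mul {m : ℕ} {e : ExteriorAlgebra R W} (he : e ∈ ⋀[R]^m W) (v : M)
    (x : ExteriorAlgebra R M) :
    contractAlong B e (ι R v * x) =
      (-1 : R) ^ m • (ι R v * contractAlong B e x - contractAlong B (B.flip v ⌋ e) x) := by
  rw [contractAlong_contractLeft_flip_apply B he, sub_sub_cancel, smul_smul, ← mul_pow,
    neg_one_mul, neg_neg, one_pow, one_smul]

theorem contractAlong_apply_eq_contractAlong_flip_apply_one {k : ℕ} {γ : ExteriorAlgebra R W}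
    (hγ : γ ∈ ⋀[R]^k W) {b : ExteriorAlgebra R M} (hb : b ∈ ⋀[R]^k M) :
    contractAlong B γ b = contractAlong B (contractAlong B.flip b γ) 1 := by
  induction hb using Submodule.pow_induction_on_left' generalizing γ with
  | algebraMap r =>
    rw [contractAlong_algebraMap_apply, map_smul, LinearMap.smul_apply,
      Algebra.algebraMap_eq_smul_one, map_smul]
  | add b₁ b₂ i _ _ h₁ h₂ => simp only [map_add, LinearMap.add_apply, h₁ hγ, h₂ hγ]
  | mem_mul m hm i b hb ih =>
    obtain ⟨v, rfl⟩ := hm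
    have hflip : contractAlong B.flip (ι R v * b) γ =
        (-1 : R) ^ i • contractAlong B.flip b (B.flip v ⌋ γ) := by
      rw [ι_mul_comm_of_mem_exteriorPower hb, map_smul, map_mul, LinearMap.smul_apply,
        Module.End.mul_apply, contractAlong_ι]
    rw [contractAlong_apply_ι_mul B hγ, contractAlong_eq_zero_of_lt B hγ hb i.lt_succ_self,
      mul_zero, zero_sub, hflip, map_smul, LinearMap.smul_apply,
      ← ih (contractLeft_mem_exteriorPower _ hγ), smul_neg, ← neg_smul, pow_succ, mul_neg_one,
      neg_neg]

/-- The codegrees `m = n - p` and `r = n - q` are explicit, to avoid truncated subtraction. -/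
theorem contractAlong_contractAlong_flip_comm {n : ℕ} (htop : ⋀[R]^(n + 1) M = ⊥)
    {γ : ExteriorAlgebra R W} (hγ : γ ∈ ⋀[R]^n W) {p m q r : ℕ} (hpm : p + m = n)
    (hqr : q + r = n) {a b : ExteriorAlgebra R M} (ha : a ∈ ⋀[R]^p M) (hb : b ∈ ⋀[R]^q M) :
    contractAlong B (contractAlong B.flip a γ) b =
      (-1 : R) ^ (m * r) • contractAlong B (contractAlong B.flip b γ) a := by
  induction ha using Submodule.pow_induction_on_left' generalizing m q r b with
  | algebraMap s =>
    rw [zero_add] at hpm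
    subst hpm
    rw [contractAlong_algebraMap_apply, map_smul, LinearMap.smul_apply,
      Algebra.algebraMap_eq_smul_one, map_smul, smul_comm]
    congr 1
    cases r with
    | zero =>
      rw [add_zero] at hqr
      subst hqr
      rw [mul_zero, pow_zero, one_smul]
      exact contractAlong_apply_eq_contractAlong_flip_apply_one B hγ hb
    | succ r =>
      have hf := contractAlong_mem_exteriorPower B.flip hb (by rwa [← hqr] at hγ)
      rw [contractAlong_eq_zero_of_lt B hγ hb (by omega),
        contractAlong_eq_zero_of_lt B hf SetLike.GradedOne.one_mem r.succ_pos, smul_zero]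
  | add a₁ a₂ i _ _ h₁ h₂ =>
    simp only [map_add, LinearMap.add_apply, h₁ hpm hqr hb, h₂ hpm hqr hb, smul_add]
  | mem_mul u hu i a ha ih =>
    obtain ⟨v, rfl⟩ := hu
    have he : contractAlong B.flip a γ ∈ ⋀[R]^(m + 1) W :=
      contractAlong_mem_exteriorPower B.flip ha (by rwa [← hpm, Nat.succ_add_eq_add_succ] at hγ)
    have hf : contractAlong B.flip b γ ∈ ⋀[R]^r W :=
      contractAlong_mem_exteriorPower B.flip hb (by rwa [← hqr] at hγ)
    have hcross : (-1 : R) ^ (m + 1) • contractAlong B (contractAlong B.flip a γ) (ι R v * b) =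
        (-1 : R) ^ ((m + 1) * r) • contractAlong B (B.flip v ⌋ contractAlong B.flip b γ) a := by
      cases r with
      | zero =>
        have hvb : ι R v * b = 0 := by
          have hvb := ι_mul_mem_exteriorPower v hb
          rw [add_zero] at hqr
          rwa [hqr, htop, Submodule.mem_bot] at hvb
        rw [hvb, map_zero, smul_zero, contractLeft_eq_zero_of_mem_exteriorPower_zero _ hf,
          map_zero, LinearMap.zero_apply, smul_zero]
      | succ r =>
        rw [ih (m := m + 1) (q := q + 1) (r := r) (by omega) (by omega)
          (ι_mul_mem_exteriorPower v hb), contractAlong_ι_mul_apply, smul_smul, ← pow_add]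
        ring_nf
    rw [contractAlong_ι_mul_apply, contractAlong_contractLeft_flip_apply B he,
      ih (m := m + 1) (by omega) hqr hb, hcross, contractAlong_apply_ι_mul B hf, mul_smul_comm,
      ← smul_sub, smul_smul, ← pow_add]
    ring_nf

end ExteriorAlgebra

/-- Proposition 1.2(b): if `F` is free of rank `n`, `γ ∈ ⋀^n F*` and `a`, `b` are
homogeneous of degrees `p`, `q`, then `(a ⌟ γ) ⌟ b = (-1)^((n-p)(n-q)) • ((b ⌟ γ) ⌟ a)`. -/
theorem contraction_top_symmetry (R : Type*) [CommRing R]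
    (F : Type*) [AddCommGroup F] [Module R F] [Module.Free R F] [Module.Finite R F]
    (n : ℕ) (hrank : Module.finrank R F = n)
    (γ : ExteriorAlgebra R (Module.Dual R F)) (hγ : extDeg R n γ)
    (a b : ExteriorAlgebra R F) (p q : ℕ) (ha : extDeg R p a) (hb : extDeg R q b) :
    extContract R (extContractD R a γ) b =
      ((-1 : R) ^ ((n - p) * (n - q))) • extContract R (extContractD R b γ) a := by
  have hΦ : extContract R = contractAlong (LinearMap.id : Module.Dual R F →ₗ[R] _) := rfl
  have hΦ' : extContractD R = contractAlong (LinearMap.id : Module.Dual R F →ₗ[R] _).flip := rfl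
  have hvanish {k : ℕ} (hk : n < k) : ⋀[R]^k F = ⊥ :=
    exteriorPower_eq_bot_of_finrank_lt (hrank ▸ hk)
  rcases le_or_gt p n with hp | hp
  · rcases le_or_gt q n with hq | hq
    · rw [hΦ, hΦ']
      exact contractAlong_contractAlong_flip_comm _ (hvanish n.lt_succ_self) hγ
        (Nat.add_sub_cancel' hp) (Nat.add_sub_cancel' hq) ha hb
    · obtain rfl : b = 0 := (Submodule.mem_bot R).mp (hvanish hq ▸ hb)
      simp
  · obtain rfl : a = 0 := (Submodule.mem_bot R).mp (hvanish hp ▸ ha)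
    simp
end

section
/- Let F be a free R-module of rank n, γ a homogeneous element of ⋀F*, a a homogeneous element of ⋀F, and b ∈ ⋀^n F a top-degree element. Then (a ⌟ γ) ⌟ b = a ∧ (γ ⌟ b). -/
/-!
Contraction by a vector `x ∈ F` is a graded derivation of `⋀ F*`, which yields
`(x ⌟ γ) ⌟ c = x ∧ (γ ⌟ c) - γ̂ ⌟ (x ∧ c)` with `γ̂` the grade involution of `γ`.
For `b` of top degree every `x ∧ b` vanishes, so `a ↦ (a ⌟ γ) ⌟ b` agrees with `a ↦ a ∧ (γ ⌟ b)`
on vectors; both are multiplicative in `a` because `⋀ F` acts on `⋀ F*` by contraction,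
hence they agree on all of `⋀ F`.
-/

open ExteriorAlgebra

namespace ExteriorAlgebra

variable {R : Type*} [CommRing R] {M : Type*} [AddCommGroup M] [Module R M]

@[simp]
theorem extContract_ι (d : Module.Dual R M) :
    extContract R (ι R d) = CliffordAlgebra.contractLeft (Q := (0 : QuadraticForm R M)) d :=
  lift_ι_apply _ _ _ _

@[simp]
theorem extContractD_ι (x : M) :
    extContractD R (ι R x) =
      CliffordAlgebra.contractLeft (Q := (0 : QuadraticForm R (Module.Dual R M)))
        (Module.Dual.eval R M x) :=
  lift_ι_apply _ _ _ _

theorem extContract_contractLeft_eval (x : M) (γ : ExteriorAlgebra R (Module.Dual R M))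
    (c : ExteriorAlgebra R M) :
    extContract R (CliffordAlgebra.contractLeft (Module.Dual.eval R M x) γ) c =
      ι R x * extContract R γ c -
        extContract R (CliffordAlgebra.involute (Q := 0) γ) (ι R x * c) := by
  induction γ using CliffordAlgebra.left_induction generalizing c with
  | algebraMap r => simp [Algebra.algebraMap_eq_smul_one]
  | add γ₁ γ₂ h₁ h₂ =>
    simp only [map_add, LinearMap.add_apply, h₁, h₂, mul_add]
    abel
  | ι_mul γ d ih =>
    simp only [CliffordAlgebra.contractLeft_ι_mul, map_mul, map_sub, map_smul, map_neg,
      CliffordAlgebra.involute_ι, LinearMap.sub_apply, LinearMap.smul_apply, LinearMap.neg_apply,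
      Module.End.mul_apply, ih, Module.Dual.eval_apply]
    rw [show CliffordAlgebra.ι 0 d = ι R d from rfl, extContract_ι,
      CliffordAlgebra.contractLeft_ι_mul]
    module

theorem extContract_extContractD_of_forall_ι_mul_eq_zero {b : ExteriorAlgebra R M}
    (hb : ∀ x, ι R x * b = 0) (a : ExteriorAlgebra R M) (γ : ExteriorAlgebra R (Module.Dual R M)) :
    extContract R (extContractD R a γ) b = a * extContract R γ b := by
  induction a using ExteriorAlgebra.induction generalizing γ with
  | algebraMap r => simp [Algebra.algebraMap_eq_smul_one]
  | ι x => rw [extContractD_ι, extContract_contractLeft_eval, hb, map_zero, sub_zero]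
  | mul a₁ a₂ h₁ h₂ => rw [map_mul, Module.End.mul_apply, h₁, h₂, mul_assoc]
  | add a₁ a₂ h₁ h₂ =>
    rw [map_add, LinearMap.add_apply, map_add, LinearMap.add_apply, h₁, h₂, add_mul]

theorem ι_mul_eq_zero_of_mem_exteriorPower_finrank [Module.Free R M] [Module.Finite R M]
    {b : ExteriorAlgebra R M} (hb : b ∈ ⋀[R]^(Module.finrank R M) M) (x : M) :
    ι R x * b = 0 := by
  cases subsingleton_or_nontrivial R
  · have := Module.subsingleton R (ExteriorAlgebra R M)
    exact Subsingleton.elim _ _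
  have : Subsingleton (⋀[R]^(Module.finrank R M + 1) M) :=
    (Module.finrank_eq_zero_iff_of_free R _).mp
      (by rw [exteriorPower.finrank_eq, Nat.choose_succ_self])
  have hmem : ι R x * b ∈ ⋀[R]^(Module.finrank R M + 1) M := by
    rw [exteriorPower, pow_succ']
    exact Submodule.mul_mem_mul (LinearMap.mem_range_self _ x) hb
  exact congrArg Subtype.val (Subsingleton.elim (⟨_, hmem⟩ : ⋀[R]^(Module.finrank R M + 1) M) 0)

end ExteriorAlgebra

theorem contraction_top_formula_general (R : Type*) [CommRing R]
    (F : Type*) [AddCommGroup F] [Module R F] [Module.Free R F] [Module.Finite R F]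
    (n : ℕ) (hrank : Module.finrank R F = n)
    (γ : ExteriorAlgebra R (Module.Dual R F))
    (a b : ExteriorAlgebra R F) (hb : extDeg R n b) :
    extContract R (extContractD R a γ) b = a * extContract R γ b := by
  subst hrank
  exact extContract_extContractD_of_forall_ι_mul_eq_zero
    (ι_mul_eq_zero_of_mem_exteriorPower_finrank hb) a γ

/-- Corollary 1.3: if `F` is free of rank `n`, `γ ∈ ⋀ F*` is homogeneous, `a ∈ ⋀ F` is
homogeneous, and `b ∈ ⋀^n F` is a top-degree element, then `(a ⌟ γ) ⌟ b = a ∧ (γ ⌟ b)`. -/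
theorem contraction_top_formula (R : Type*) [CommRing R]
    (F : Type*) [AddCommGroup F] [Module R F] [Module.Free R F] [Module.Finite R F]
    (n : ℕ) (hrank : Module.finrank R F = n)
    (γ : ExteriorAlgebra R (Module.Dual R F)) (j : ℕ) (hγ : extDeg R j γ)
    (a b : ExteriorAlgebra R F) (p : ℕ) (ha : extDeg R p a) (hb : extDeg R n b) :
    extContract R (extContractD R a γ) b = a * extContract R γ b :=
  contraction_top_formula_general R F n hrank γ a b hb
end

section
/- Let u, v, X be generic matrices over a commutative noetherian ring R₀ as in the main construction, R the polynomial ring, H = H(u,X,v), and R̄ = R/H. For s = u_i (any i), the localization H_s of H at s is generated by the entries of uX together with the entries of the first column of vu − adjugate(X); consequently R̄_s is isomorphic to a localization of a polynomial ring in n² variables over R₀. -/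
/-!
Over a commutative ring in which `uᵢ` is a unit, the relations `u X = 0` and `v uᵢ = (adj X)ᵢ`
(the `i`-th column of `v u = adj X`) imply all of `H`: `u X = 0` gives `uᵢ det X = 0`, so
`det X = 0` and `uᵢ (X v) = X (adj X)ᵢ = 0`, while the determinant identity
`uᵢ adj(X)ₖⱼ = uⱼ adj(X)ₖᵢ` gives `v u = adj X`. Applied in `R_s ⧸ J R_s`, where `J` is the smaller
ideal, this is the equality `H R_s = J R_s`.

In `R̄_s` the same relations solve for row `i` of `X` (`xᵢⱼ = -uᵢ⁻¹ ∑_{m ≠ i} u_m x_mj`) and for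
`v` (`vₖ = uᵢ⁻¹ adj(X)ₖᵢ`), so `R̄_s` is the localization at `uᵢ` of the polynomial ring in `u` and
the rows `m ≠ i` of `X`. We arrange these `n²` variables in an `n × n` matrix whose `i`-th row is
`u`. The map out of `R̄_s` is well defined by the first part, which leaves only `u X = 0` and the
`i`-th column to be checked.
-/

/-- The ideal generated by the entries of `u·X`, of `X·v` and of `v·u − adjugate X`. -/
def idealH {R : Type*} [CommRing R] {n : ℕ} (u : Matrix (Fin 1) (Fin n) R)
    (X : Matrix (Fin n) (Fin n) R) (v : Matrix (Fin n) (Fin 1) R) : Ideal R :=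
  Ideal.span
    ((Set.range fun j : Fin n => (u * X) 0 j) ∪
      (Set.range fun i : Fin n => (X * v) i 0) ∪
      (Set.range fun p : Fin n × Fin n => (v * u - X.adjugate) p.1 p.2))

open Matrix

section Adjugate

variable {A : Type*} [CommRing A] {ι : Type*} [Fintype ι] [DecidableEq ι]

theorem det_smul_eq_zero_of_vecMul_eq_zero {u : ι → A} {X : Matrix ι ι A} (h : u ᵥ* X = 0) :
    X.det • u = 0 := by
  simpa [vecMul_vecMul, mul_adjugate, vecMul_smul] using congrArg (· ᵥ* X.adjugate) h

theorem mul_adjugate_apply_comm_of_vecMul_eq_zero {u : ι → A} {X : Matrix ι ι A}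
    (h : u ᵥ* X = 0) (i j k : ι) : u i * X.adjugate k j = u j * X.adjugate k i := by
  rcases eq_or_ne i j with rfl | hij
  · rfl
  set e : ι → A := Pi.single k 1
  set M := X.updateRow j e
  have hrows : ∑ m, u m • M m = u j • e - u j • X j := by
    have hM : (fun m => u m • M m) = Function.update (fun m => u m • X m) j (u j • e) := by
      ext1 m
      rcases eq_or_ne m j with rfl | hm <;> simp [M, updateRow_ne, *]
    rw [hM, Finset.sum_update_of_mem (Finset.mem_univ j), Finset.sdiff_singleton_eq_erase,
      Finset.sum_erase_eq_sub (Finset.mem_univ j), ← vecMul_eq_sum, h, zero_sub,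
      ← sub_eq_add_neg]
  have hswap : M.updateRow i (X j) = (X.updateRow i e).submatrix (Equiv.swap i j) id := by
    ext m l
    simp only [M, submatrix_apply, id_eq, updateRow_apply, Equiv.swap_apply_def]
    split_ifs <;> simp_all
  have hrep : (M.updateRow i e).det = 0 :=
    det_zero_of_row_eq hij (by simp [M, updateRow_ne hij.symm])
  -- `det M = adj(X)ₖⱼ`; replacing row `i` of `M` by `∑ u m • M m` multiplies it by `u i`.
  have key := det_updateRow_sum M i u
  rw [hrows, sub_eq_add_neg, ← neg_smul, det_updateRow_add, det_updateRow_smul,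
    det_updateRow_smul, hrep, hswap, det_permute, Equiv.Perm.sign_swap hij] at key
  simp only [adjugate_apply]
  push_cast at key
  linear_combination -key

end Adjugate

section IdealH

variable {A B : Type*} [CommRing A] [CommRing B] {n : ℕ} (u : Matrix (Fin 1) (Fin n) A)
  (X : Matrix (Fin n) (Fin n) A) (v : Matrix (Fin n) (Fin 1) A) (i : Fin n)

def idealHCol : Ideal A :=
  Ideal.span ((Set.range fun j : Fin n => (u * X) 0 j) ∪
    (Set.range fun k : Fin n => (v * u - X.adjugate) k i))

theorem idealH_map {F : Type*} [FunLike F A B] [RingHomClass F A B] (f : F) :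
    (idealH u X v).map f = idealH (u.map f) (X.map f) (v.map f) := by
  have hadj : (X.map f).adjugate = X.adjugate.map f := ((f : A →+* B).map_adjugate X).symm
  simp only [idealH, Ideal.map_span, Set.image_union, ← Set.range_comp, Function.comp_def,
    ← Matrix.map_mul, hadj, Matrix.sub_apply, Matrix.map_apply, map_sub]

theorem idealHCol_map {F : Type*} [FunLike F A B] [RingHomClass F A B] (f : F) :
    (idealHCol u X v i).map f = idealHCol (u.map f) (X.map f) (v.map f) i := by
  have hadj : (X.map f).adjugate = X.adjugate.map f := ((f : A →+* B).map_adjugate X).symm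
  simp only [idealHCol, Ideal.map_span, Set.image_union, ← Set.range_comp, Function.comp_def,
    ← Matrix.map_mul, hadj, Matrix.sub_apply, Matrix.map_apply, map_sub]

theorem idealH_eq_bot_iff :
    idealH u X v = ⊥ ↔ u * X = 0 ∧ X * v = 0 ∧ v * u = X.adjugate := by
  simp only [idealH, Ideal.span_eq_bot, Set.mem_union, or_imp, forall_and, Set.forall_mem_range,
    ← Matrix.ext_iff, Fin.forall_fin_one, Matrix.sub_apply, sub_eq_zero, Prod.forall, and_assoc,
    Matrix.zero_apply]

theorem idealHCol_eq_bot_iff :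
    idealHCol u X v i = ⊥ ↔ u * X = 0 ∧ ∀ k, (v * u) k i = X.adjugate k i := by
  simp only [idealHCol, Ideal.span_eq_bot, Set.mem_union, or_imp, forall_and,
    Set.forall_mem_range, ← Matrix.ext_iff, Fin.forall_fin_one, sub_eq_zero, Matrix.zero_apply,
    Matrix.sub_apply]

variable {u X v i}

theorem mul_eq_zero_and_mul_eq_adjugate (hi : IsUnit (u 0 i)) (huX : u * X = 0)
    (hcol : ∀ k, (v * u) k i = X.adjugate k i) : X * v = 0 ∧ v * u = X.adjugate := by
  have hrow : u 0 ᵥ* X = 0 := congrFun huX 0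
  have hvu : ∀ k j, (v * u) k j = v k 0 * u 0 j := fun k j => by simp [mul_apply]
  have hdet : X.det = 0 := hi.mul_left_injective <| by
    simpa using congrFun (det_smul_eq_zero_of_vecMul_eq_zero hrow) i
  refine ⟨?_, ?_⟩
  · ext k l
    rw [Fin.fin_one_eq_zero l]
    apply hi.mul_left_injective
    calc (X * v) k 0 * u 0 i = ∑ j, X k j * (v * u) j i := by
          simp only [mul_apply, Finset.sum_mul, Fin.sum_univ_one, mul_assoc]
      _ = (X * X.adjugate) k i := by simp only [hcol, mul_apply]
      _ = 0 * u 0 i := by simp [mul_adjugate, hdet]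
  · ext k j
    apply hi.mul_left_injective
    calc (v * u) k j * u 0 i = u 0 j * (v * u) k i := by rw [hvu, hvu]; ring
      _ = X.adjugate k j * u 0 i := by
        rw [hcol, ← mul_adjugate_apply_comm_of_vecMul_eq_zero hrow, mul_comm]

theorem idealH_eq_bot_of_idealHCol_eq_bot (hi : IsUnit (u 0 i)) (h : idealHCol u X v i = ⊥) :
    idealH u X v = ⊥ := by
  rw [idealHCol_eq_bot_iff] at h
  rw [idealH_eq_bot_iff]
  exact ⟨h.1, mul_eq_zero_and_mul_eq_adjugate hi h.1 h.2⟩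

theorem idealH_le_ker_of_idealHCol_le_ker {F : Type*} [FunLike F A B] [RingHomClass F A B]
    (f : F) (hi : IsUnit (f (u 0 i)))
    (h : idealHCol u X v i ≤ RingHom.ker f) : idealH u X v ≤ RingHom.ker f := by
  rw [← Ideal.map_eq_bot_iff_le_ker, idealHCol_map] at h
  rw [← Ideal.map_eq_bot_iff_le_ker, idealH_map]
  exact idealH_eq_bot_of_idealHCol_eq_bot hi h

theorem idealH_map_away_eq :
    (idealH u X v).map (algebraMap A (Localization.Away (u 0 i))) =
      (idealHCol u X v i).map (algebraMap A (Localization.Away (u 0 i))) := by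
  set f := algebraMap A (Localization.Away (u 0 i))
  set J := (idealHCol u X v i).map f
  refine le_antisymm ?_ (Ideal.map_mono ?_)
  · have hker : RingHom.ker ((Ideal.Quotient.mk J).comp f) = J.comap f := by
      rw [← RingHom.comap_ker, Ideal.mk_ker]
    rw [Ideal.map_le_iff_le_comap, ← hker]
    refine idealH_le_ker_of_idealHCol_le_ker (i := i) _
      ((IsLocalization.Away.algebraMap_isUnit (u 0 i)).map (Ideal.Quotient.mk J)) ?_
    rw [hker]
    exact Ideal.le_comap_map
  · refine Ideal.span_mono (Set.union_subset_union Set.subset_union_left ?_)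
    rintro _ ⟨k, rfl⟩
    exact ⟨(k, i), rfl⟩

end IdealH

section SolveRow

variable {A : Type*} [CommRing A] {ι κ : Type*} [Fintype ι] [DecidableEq ι]

theorem vecMul_updateRow (u : ι → A) (M : Matrix ι κ A) (i : ι) (r : κ → A) :
    u ᵥ* M.updateRow i r = u ᵥ* M.updateRow i 0 + u i • r := by
  ext j
  simp [vecMul, dotProduct, updateRow_apply, Finset.sum_ite, Finset.filter_eq', add_comm]

/-- `M` with row `i` replaced by the solution `r` of `u ᵥ* M.updateRow i r = 0`, where `t` stands
for `(u i)⁻¹`. -/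
def solveRow (u : ι → A) (t : A) (M : Matrix ι κ A) (i : ι) : Matrix ι κ A :=
  M.updateRow i (-(t • (u ᵥ* M.updateRow i 0)))

variable {u : ι → A} {t : A} (M : Matrix ι κ A) (i : ι)

theorem vecMul_solveRow (ht : t * u i = 1) : u ᵥ* solveRow u t M i = 0 := by
  rw [solveRow, vecMul_updateRow, smul_neg, smul_smul, mul_comm, ht, one_smul, add_neg_cancel]

theorem solveRow_eq_self (ht : t * u i = 1) (h : u ᵥ* M = 0) : solveRow u t M i = M := by
  have hrow := vecMul_updateRow u M i (M i)
  rw [updateRow_eq_self, h, eq_comm, add_eq_zero_iff_eq_neg] at hrow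
  rw [solveRow, hrow, smul_neg, neg_neg, smul_smul, ht, one_smul, updateRow_eq_self]

theorem solveRow_updateRow (r : κ → A) :
    solveRow u t (M.updateRow i r) i = solveRow u t M i := by
  simp only [solveRow, updateRow_idem]

theorem map_solveRow {B F : Type*} [CommRing B] [FunLike F A B] [RingHomClass F A B] (f : F) :
    (solveRow u t M i).map f = solveRow (f ∘ u) (f t) (M.map f) i := by
  rw [solveRow, solveRow, map_updateRow]
  congr 1
  ext j
  have h0 : (f ∘ 0 : κ → B) = 0 := funext fun _ => map_zero f
  have h := RingHom.map_vecMul (f : A →+* B) (M.updateRow i 0) u j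
  simp only [RingHom.coe_coe, map_updateRow, h0] at h
  simp [h]

end SolveRow

noncomputable section Elimination

abbrev GenericVars (n : ℕ) : Type := (Fin n ⊕ Fin n) ⊕ Fin n × Fin n

variable (R₀ : Type*) [CommRing R₀] (n : ℕ)

def genericRow : Matrix (Fin 1) (Fin n) (MvPolynomial (GenericVars n) R₀) :=
  fun _ j => MvPolynomial.X (.inl (.inl j))

def genericCol : Matrix (Fin n) (Fin 1) (MvPolynomial (GenericVars n) R₀) :=
  fun k _ => MvPolynomial.X (.inl (.inr k))

def genericMatrix : Matrix (Fin n) (Fin n) (MvPolynomial (GenericVars n) R₀) :=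
  fun a b => MvPolynomial.X (.inr (a, b))

def flatGenericMatrix : Matrix (Fin n) (Fin n) (MvPolynomial (Fin (n * n)) R₀) :=
  fun a b => MvPolynomial.X (finProdFinEquiv (a, b))

variable {n} (i : Fin n)

local notation "T" => MvPolynomial (GenericVars n) R₀
local notation "B" => MvPolynomial (Fin (n * n)) R₀
local notation "uᵢ" => (MvPolynomial.X (Sum.inl (Sum.inl i)) : T)
local notation "yᵢᵢ" => (MvPolynomial.X (finProdFinEquiv (i, i)) : B)
local notation "H" => idealH (genericRow R₀ n) (genericMatrix R₀ n) (genericCol R₀ n)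
local notation "Q" => Localization.Away (Ideal.Quotient.mk H uᵢ)
local notation "L" => Localization.Away yᵢᵢ

def flatGenericMatrixAway : Matrix (Fin n) (Fin n) L :=
  (flatGenericMatrix R₀ n).map (algebraMap B L)

def invPivot : L := IsLocalization.Away.invSelf yᵢᵢ

theorem invPivot_mul : invPivot R₀ i * flatGenericMatrixAway R₀ i i i = 1 := by
  rw [mul_comm (invPivot R₀ i)]
  exact IsLocalization.Away.mul_invSelf yᵢᵢ

def completedMatrix : Matrix (Fin n) (Fin n) L :=
  solveRow (flatGenericMatrixAway R₀ i i) (invPivot R₀ i) (flatGenericMatrixAway R₀ i) i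

def eliminate : T →ₐ[R₀] L :=
  MvPolynomial.aeval <| Sum.elim
    (Sum.elim (flatGenericMatrixAway R₀ i i)
      fun k => invPivot R₀ i * (completedMatrix R₀ i).adjugate k i)
    fun p => completedMatrix R₀ i p.1 p.2

theorem map_genericRow_eliminate :
    (genericRow R₀ n).map (eliminate R₀ i) = of fun _ j => flatGenericMatrixAway R₀ i i j := by
  ext _ j
  simp [genericRow, eliminate]

theorem map_genericMatrix_eliminate :
    (genericMatrix R₀ n).map (eliminate R₀ i) = completedMatrix R₀ i := by
  ext a b
  simp [genericMatrix, eliminate]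

theorem map_genericCol_eliminate :
    (genericCol R₀ n).map (eliminate R₀ i) =
      of fun k _ => invPivot R₀ i * (completedMatrix R₀ i).adjugate k i := by
  ext k _
  simp [genericCol, eliminate]

theorem isUnit_eliminate_pivot : IsUnit (eliminate R₀ i uᵢ) := by
  rw [eliminate, MvPolynomial.aeval_X]
  exact IsUnit.of_mul_eq_one_right _ (invPivot_mul R₀ i)

theorem idealH_le_ker_eliminate : H ≤ RingHom.ker (eliminate R₀ i) := by
  refine idealH_le_ker_of_idealHCol_le_ker (i := i) (eliminate R₀ i)
    (isUnit_eliminate_pivot R₀ i) ?_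
  rw [← Ideal.map_eq_bot_iff_le_ker, idealHCol_map, idealHCol_eq_bot_iff,
    map_genericRow_eliminate, map_genericMatrix_eliminate, map_genericCol_eliminate]
  refine ⟨?_, fun k => ?_⟩
  · ext _ j
    exact congrFun (vecMul_solveRow _ i (invPivot_mul R₀ i)) j
  · simp only [mul_apply, of_apply, Fin.sum_univ_one]
    linear_combination (completedMatrix R₀ i).adjugate k i * invPivot_mul R₀ i

def toAwayQuotient : T →ₐ[R₀] Q :=
  (IsScalarTower.toAlgHom R₀ (T ⧸ H) Q).comp (Ideal.Quotient.mkₐ R₀ H)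

theorem isUnit_toAwayQuotient_pivot : IsUnit (toAwayQuotient R₀ i uᵢ) :=
  IsLocalization.Away.algebraMap_isUnit (Ideal.Quotient.mk H uᵢ)

theorem idealH_map_toAwayQuotient_eq_bot :
    idealH ((genericRow R₀ n).map (toAwayQuotient R₀ i))
      ((genericMatrix R₀ n).map (toAwayQuotient R₀ i))
      ((genericCol R₀ n).map (toAwayQuotient R₀ i)) = ⊥ := by
  rw [← idealH_map, Ideal.map_eq_bot_iff_le_ker]
  intro p hp
  rw [RingHom.mem_ker, toAwayQuotient, AlgHom.comp_apply, Ideal.Quotient.mkₐ_eq_mk,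
    Ideal.Quotient.eq_zero_iff_mem.mpr hp, map_zero]

def quotientToAway : T ⧸ H →ₐ[R₀] L :=
  Ideal.Quotient.liftₐ H (eliminate R₀ i) fun _ ha =>
    RingHom.mem_ker.mp (idealH_le_ker_eliminate R₀ i ha)

theorem quotientToAway_mk (p : T) :
    quotientToAway R₀ i (Ideal.Quotient.mk H p) = eliminate R₀ i p :=
  rfl

def awayQuotientToAway : Q →ₐ[R₀] L :=
  IsLocalization.Away.liftAlgHom _ (f := quotientToAway R₀ i) <| by
    rw [quotientToAway_mk]
    exact isUnit_eliminate_pivot R₀ i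

theorem awayQuotientToAway_toAwayQuotient (p : T) :
    awayQuotientToAway R₀ i (toAwayQuotient R₀ i p) = eliminate R₀ i p := by
  rw [awayQuotientToAway, toAwayQuotient, AlgHom.comp_apply, IsScalarTower.coe_toAlgHom',
    Ideal.Quotient.mkₐ_eq_mk, IsLocalization.Away.liftAlgHom_apply, IsLocalization.Away.lift_eq]
  exact quotientToAway_mk R₀ i p

def restoreVars : B →ₐ[R₀] T :=
  MvPolynomial.aeval fun k =>
    (genericMatrix R₀ n).updateRow i (genericRow R₀ n 0)
      (finProdFinEquiv.symm k).1 (finProdFinEquiv.symm k).2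

theorem map_flatGenericMatrix_restoreVars :
    (flatGenericMatrix R₀ n).map (restoreVars R₀ i) =
      (genericMatrix R₀ n).updateRow i (genericRow R₀ n 0) := by
  ext a b
  simp only [flatGenericMatrix, restoreVars, Matrix.map_apply, MvPolynomial.aeval_X,
    Equiv.symm_apply_apply]

def awayToAwayQuotient : L →ₐ[R₀] Q :=
  IsLocalization.Away.liftAlgHom yᵢᵢ (f := (toAwayQuotient R₀ i).comp (restoreVars R₀ i)) <| by
    rw [AlgHom.comp_apply, restoreVars, MvPolynomial.aeval_X, Equiv.symm_apply_apply,
      updateRow_self]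
    exact isUnit_toAwayQuotient_pivot R₀ i

theorem awayToAwayQuotient_algebraMap (p : B) :
    awayToAwayQuotient R₀ i (algebraMap B L p) = toAwayQuotient R₀ i (restoreVars R₀ i p) := by
  rw [awayToAwayQuotient, IsLocalization.Away.liftAlgHom_apply, IsLocalization.Away.lift_eq]
  rfl

theorem map_flatGenericMatrixAway_awayToAwayQuotient :
    (flatGenericMatrixAway R₀ i).map (awayToAwayQuotient R₀ i) =
      ((genericMatrix R₀ n).updateRow i (genericRow R₀ n 0)).map (toAwayQuotient R₀ i) := by
  rw [← map_flatGenericMatrix_restoreVars, flatGenericMatrixAway, Matrix.map_map,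
    Matrix.map_map]
  congr 1
  funext p
  exact awayToAwayQuotient_algebraMap R₀ i p

theorem awayToAwayQuotient_comp_pivotRow :
    awayToAwayQuotient R₀ i ∘ flatGenericMatrixAway R₀ i i =
      (genericRow R₀ n).map (toAwayQuotient R₀ i) 0 := by
  funext j
  simpa using congrFun (congrFun (map_flatGenericMatrixAway_awayToAwayQuotient R₀ i) i) j

theorem awayToAwayQuotient_invPivot_mul :
    awayToAwayQuotient R₀ i (invPivot R₀ i) * toAwayQuotient R₀ i (genericRow R₀ n 0 i) =
      1 := by
  have h := congrArg (awayToAwayQuotient R₀ i) (invPivot_mul R₀ i)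
  rwa [map_mul, map_one, ← Function.comp_apply (f := awayToAwayQuotient R₀ i),
    awayToAwayQuotient_comp_pivotRow] at h

theorem map_completedMatrix_awayToAwayQuotient :
    (completedMatrix R₀ i).map (awayToAwayQuotient R₀ i) =
      (genericMatrix R₀ n).map (toAwayQuotient R₀ i) := by
  obtain ⟨huX, -, -⟩ := (idealH_eq_bot_iff _ _ _).mp (idealH_map_toAwayQuotient_eq_bot R₀ i)
  rw [completedMatrix, map_solveRow, map_flatGenericMatrixAway_awayToAwayQuotient,
    map_updateRow, solveRow_updateRow, awayToAwayQuotient_comp_pivotRow]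
  exact solveRow_eq_self _ i (awayToAwayQuotient_invPivot_mul R₀ i) (congrFun huX 0)

theorem awayToAwayQuotient_invPivot_mul_adjugate (k : Fin n) :
    awayToAwayQuotient R₀ i (invPivot R₀ i * (completedMatrix R₀ i).adjugate k i) =
      toAwayQuotient R₀ i (genericCol R₀ n k 0) := by
  obtain ⟨-, -, hvu⟩ := (idealH_eq_bot_iff _ _ _).mp (idealH_map_toAwayQuotient_eq_bot R₀ i)
  have hadj := congrFun (congrFun
    ((awayToAwayQuotient R₀ i).map_adjugate (completedMatrix R₀ i)) k) i
  simp only [AlgHom.mapMatrix_apply, map_apply, map_completedMatrix_awayToAwayQuotient,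
    ← hvu, mul_apply, Fin.sum_univ_one] at hadj
  rw [map_mul, hadj]
  linear_combination toAwayQuotient R₀ i (genericCol R₀ n k 0) *
    awayToAwayQuotient_invPivot_mul R₀ i

theorem awayToAwayQuotient_comp_awayQuotientToAway :
    (awayToAwayQuotient R₀ i).comp (awayQuotientToAway R₀ i) = AlgHom.id R₀ Q := by
  apply IsLocalization.algHom_ext (Submonoid.powers (Ideal.Quotient.mk H uᵢ))
  apply Ideal.Quotient.algHom_ext
  apply MvPolynomial.algHom_ext
  intro p
  change awayToAwayQuotient R₀ i (awayQuotientToAway R₀ i (toAwayQuotient R₀ i (.X p))) =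
    toAwayQuotient R₀ i (.X p)
  rw [awayQuotientToAway_toAwayQuotient, eliminate, MvPolynomial.aeval_X]
  rcases p with (j | k) | ⟨a, b⟩
  · exact congrFun (awayToAwayQuotient_comp_pivotRow R₀ i) j
  · exact awayToAwayQuotient_invPivot_mul_adjugate R₀ i k
  · exact congrFun (congrFun (map_completedMatrix_awayToAwayQuotient R₀ i) a) b

theorem map_flatGenericMatrix_restoreVars_eliminate :
    ((flatGenericMatrix R₀ n).map (restoreVars R₀ i)).map (eliminate R₀ i) =
      flatGenericMatrixAway R₀ i := by
  have hrow : eliminate R₀ i ∘ genericRow R₀ n 0 = flatGenericMatrixAway R₀ i i :=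
    funext fun j => congrFun (congrFun (map_genericRow_eliminate R₀ i) 0) j
  rw [map_flatGenericMatrix_restoreVars, map_updateRow, map_genericMatrix_eliminate,
    completedMatrix, solveRow, updateRow_idem, hrow, updateRow_eq_self]

theorem awayQuotientToAway_comp_awayToAwayQuotient :
    (awayQuotientToAway R₀ i).comp (awayToAwayQuotient R₀ i) = AlgHom.id R₀ L := by
  apply IsLocalization.algHom_ext (Submonoid.powers yᵢᵢ)
  apply MvPolynomial.algHom_ext
  intro k
  obtain ⟨⟨a, b⟩, rfl⟩ := finProdFinEquiv.surjective k
  change awayQuotientToAway R₀ i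
      (awayToAwayQuotient R₀ i (algebraMap B L (flatGenericMatrix R₀ n a b))) =
    algebraMap B L (flatGenericMatrix R₀ n a b)
  rw [awayToAwayQuotient_algebraMap, awayQuotientToAway_toAwayQuotient]
  exact congrFun (congrFun (map_flatGenericMatrix_restoreVars_eliminate R₀ i) a) b

def awayQuotientEquiv : Q ≃ₐ[R₀] L :=
  AlgEquiv.ofAlgHom (awayQuotientToAway R₀ i) (awayToAwayQuotient R₀ i)
    (awayQuotientToAway_comp_awayToAwayQuotient R₀ i)
    (awayToAwayQuotient_comp_awayQuotientToAway R₀ i)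

end Elimination

theorem localization_at_u_general (R₀ : Type u) [CommRing R₀]
    (n : ℕ)
    (u : Matrix (Fin 1) (Fin n) (MvPolynomial ((Fin n ⊕ Fin n) ⊕ Fin n × Fin n) R₀))
    (hu : u = fun _ j => MvPolynomial.X (Sum.inl (Sum.inl j)))
    (v : Matrix (Fin n) (Fin 1) (MvPolynomial ((Fin n ⊕ Fin n) ⊕ Fin n × Fin n) R₀))
    (hv : v = fun i _ => MvPolynomial.X (Sum.inl (Sum.inr i)))
    (Xm : Matrix (Fin n) (Fin n) (MvPolynomial ((Fin n ⊕ Fin n) ⊕ Fin n × Fin n) R₀))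
    (hX : Xm = fun i j => MvPolynomial.X (Sum.inr (i, j)))
    (i : Fin n) :
    (idealH u Xm v).map
        (algebraMap (MvPolynomial ((Fin n ⊕ Fin n) ⊕ Fin n × Fin n) R₀)
          (Localization.Away (u 0 i))) =
      (Ideal.span
          ((Set.range fun j : Fin n => (u * Xm) 0 j) ∪
            (Set.range fun k : Fin n => (v * u - Xm.adjugate) k i))).map
        (algebraMap (MvPolynomial ((Fin n ⊕ Fin n) ⊕ Fin n × Fin n) R₀)
          (Localization.Away (u 0 i))) ∧
      ∃ S : Submonoid (MvPolynomial (Fin (n * n)) R₀),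
        Nonempty
          (Localization.Away (Ideal.Quotient.mk (idealH u Xm v) (u 0 i)) ≃+*
            Localization S) := by
  refine ⟨idealH_map_away_eq, ?_⟩
  subst hu hv hX
  exact ⟨_, ⟨(awayQuotientEquiv R₀ i).toRingEquiv⟩⟩

/-- Lemma 5.2 (the case `s = uᵢ`): after inverting `s = uᵢ`, the ideal `H` is generated by
the entries of `u·X` together with the entries of the `i`-th column of `v·u − adjugate X`;
consequently `(R/H)_s` is isomorphic to a localization of a polynomial ring in `n²`
variables over `R₀`. -/
theorem localization_at_u (R₀ : Type u) [CommRing R₀] [IsNoetherianRing R₀]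
    (n : ℕ) (hn : 3 ≤ n)
    (u : Matrix (Fin 1) (Fin n) (MvPolynomial ((Fin n ⊕ Fin n) ⊕ Fin n × Fin n) R₀))
    (hu : u = fun _ j => MvPolynomial.X (Sum.inl (Sum.inl j)))
    (v : Matrix (Fin n) (Fin 1) (MvPolynomial ((Fin n ⊕ Fin n) ⊕ Fin n × Fin n) R₀))
    (hv : v = fun i _ => MvPolynomial.X (Sum.inl (Sum.inr i)))
    (Xm : Matrix (Fin n) (Fin n) (MvPolynomial ((Fin n ⊕ Fin n) ⊕ Fin n × Fin n) R₀))
    (hX : Xm = fun i j => MvPolynomial.X (Sum.inr (i, j)))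
    (i : Fin n) :
    (idealH u Xm v).map
        (algebraMap (MvPolynomial ((Fin n ⊕ Fin n) ⊕ Fin n × Fin n) R₀)
          (Localization.Away (u 0 i))) =
      (Ideal.span
          ((Set.range fun j : Fin n => (u * Xm) 0 j) ∪
            (Set.range fun k : Fin n => (v * u - Xm.adjugate) k i))).map
        (algebraMap (MvPolynomial ((Fin n ⊕ Fin n) ⊕ Fin n × Fin n) R₀)
          (Localization.Away (u 0 i))) ∧
      ∃ S : Submonoid (MvPolynomial (Fin (n * n)) R₀),
        Nonempty
          (Localization.Away (Ideal.Quotient.mk (idealH u Xm v) (u 0 i)) ≃+*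
            Localization S) :=
  localization_at_u_general R₀ n u hu v hv Xm hX i
end

section
/- Let (T,t) → (M,m) → (B,b) be maps α : T → M and β : M → B of complexes of modules over a commutative noetherian ring R with β ∘ α = 0, and let {h_i : T_i → B_{i+1}} satisfy b_{i+1} ∘ h_i + h_{i−1} ∘ t_i = 0 for all i. Define the complex D by D_i = B_i ⊕ M_{i−1} ⊕ T_{i−2} with differential d_i = [[b_i, (−1)^{i−1} β_{i−1}, h_{i−2}],[0, m_{i−1}, (−1)^i α_{i−2}],[0,0,t_{i−2}]]. If H_i(T) = H_i(M) = H_i(B) = 0 for all i ≠ 0 and 0 → H₀(T) → H₀(M) → H₀(B) is exact (via α_* and β_*), then H_i(D) = 0 for all i ≠ 0. -/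
/-- Lemma 4.4.  `T`, `M`, `B` are chain complexes of modules over the commutative noetherian
ring `R` (with differentials `t i : T (i+1) → T i`, etc.), `α : T → M` and `β : M → B` are
chain maps with `β ∘ α = 0`, and `h i : T i → B (i+1)` is a family of maps with
`b_{i+1} ∘ h_i + h_{i-1} ∘ t_i = 0`.  `D` is the twisted double mapping cone with
`D i = B i ⊕ M (i-1) ⊕ T (i-2)` and differential
`d i = [[b, (-1)^(i-1)·β, h], [0, m, (-1)^i·α], [0, 0, t]]` (below, a degree-`i` element of
`D` is written with `i = j+1+1+1` so that all indices are well formed).  If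
`H i (T) = H i (M) = H i (B) = 0` for `i ≠ 0` and `0 → H₀(T) → H₀(M) → H₀(B)` is exact,
then `H i (D) = 0` for all `i ≠ 0`. -/
theorem twisted_double_mapping_cone_acyclic
    (R : Type*) [CommRing R] [IsNoetherianRing R]
    (T M B : ℤ → Type v)
    [∀ i, AddCommGroup (T i)] [∀ i, Module R (T i)]
    [∀ i, AddCommGroup (M i)] [∀ i, Module R (M i)]
    [∀ i, AddCommGroup (B i)] [∀ i, Module R (B i)]
    (t : ∀ i, T (i + 1) →ₗ[R] T i)
    (m : ∀ i, M (i + 1) →ₗ[R] M i)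
    (b : ∀ i, B (i + 1) →ₗ[R] B i)
    (α : ∀ i, T i →ₗ[R] M i)
    (β : ∀ i, M i →ₗ[R] B i)
    (h : ∀ i, T i →ₗ[R] B (i + 1))
    -- `T`, `M`, `B` are complexes:
    (ht : ∀ i (x : T (i + 1 + 1)), t i (t (i + 1) x) = 0)
    (hm : ∀ i (x : M (i + 1 + 1)), m i (m (i + 1) x) = 0)
    (hb : ∀ i (x : B (i + 1 + 1)), b i (b (i + 1) x) = 0)
    -- `α` and `β` are chain maps with `β ∘ α = 0`:
    (hα : ∀ i (x : T (i + 1)), α i (t i x) = m i (α (i + 1) x))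
    (hβ : ∀ i (x : M (i + 1)), β i (m i x) = b i (β (i + 1) x))
    (hβα : ∀ i (x : T i), β i (α i x) = 0)
    -- the anticommuting family `h`:
    (hh : ∀ i (x : T (i + 1)), b (i + 1) (h (i + 1) x) + h i (t i x) = 0)
    -- `H i (T) = H i (M) = H i (B) = 0` for `i ≠ 0`:
    (hHT : ∀ i : ℤ, i + 1 ≠ 0 → ∀ x : T (i + 1), t i x = 0 →
      ∃ y : T (i + 1 + 1), t (i + 1) y = x)
    (hHM : ∀ i : ℤ, i + 1 ≠ 0 → ∀ x : M (i + 1), m i x = 0 →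
      ∃ y : M (i + 1 + 1), m (i + 1) y = x)
    (hHB : ∀ i : ℤ, i + 1 ≠ 0 → ∀ x : B (i + 1), b i x = 0 →
      ∃ y : B (i + 1 + 1), b (i + 1) y = x)
    -- `0 → H₀(T) → H₀(M)` is exact, i.e. `α⋆` is injective on `H₀`:
    (hinj : ∀ i : ℤ, i + 1 = 0 → ∀ x : T (i + 1), t i x = 0 →
      (∃ y : M (i + 1 + 1), m (i + 1) y = α (i + 1) x) →
      ∃ z : T (i + 1 + 1), t (i + 1) z = x)
    -- `H₀(T) → H₀(M) → H₀(B)` is exact at `H₀(M)`: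
    (hexact : ∀ i : ℤ, i + 1 = 0 → ∀ y : M (i + 1), m i y = 0 →
      (∃ w : B (i + 1 + 1), b (i + 1) w = β (i + 1) y) →
      ∃ (z : T (i + 1)) (y' : M (i + 1 + 1)),
        t i z = 0 ∧ y = α (i + 1) z + m (i + 1) y') :
    -- conclusion: `H i (D) = 0` for `i ≠ 0`, where a degree-`(j+3)` element of `D` is a
    -- triple in `B (j+3) × M (j+2) × T (j+1)`:
    ∀ j : ℤ, j + 1 + 1 + 1 ≠ 0 →
      ∀ (x : B (j + 1 + 1 + 1)) (y : M (j + 1 + 1)) (z : T (j + 1)),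
        (b (j + 1 + 1) x + (((j + 1 + 1).negOnePow : ℤ)) • β (j + 1 + 1) y +
            h (j + 1) z = 0) →
        (m (j + 1) y + (((j + 1 + 1 + 1).negOnePow : ℤ)) • α (j + 1) z = 0) →
        (t j z = 0) →
        ∃ (x' : B (j + 1 + 1 + 1 + 1)) (y' : M (j + 1 + 1 + 1)) (z' : T (j + 1 + 1)),
          b (j + 1 + 1 + 1) x' + (((j + 1 + 1 + 1).negOnePow : ℤ)) • β (j + 1 + 1 + 1) y' +
              h (j + 1 + 1) z' = x ∧
            m (j + 1 + 1) y' + (((j + 1 + 1 + 1 + 1).negOnePow : ℤ)) • α (j + 1 + 1) z' = y ∧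
            t (j + 1) z' = z := by
  intro j hj x y z e1 e2 e3
  set e : ℤ := ((j + 1 + 1).negOnePow : ℤ) with he_def
  have hsq : e * e = 1 := by
    rw [he_def, ← Units.val_mul, Int.units_mul_self, Units.val_one]
  have h3 : ((j + 1 + 1 + 1).negOnePow : ℤ) = -e := by
    rw [Int.negOnePow_succ, Units.val_neg]
  have h4 : ((j + 1 + 1 + 1 + 1).negOnePow : ℤ) = e := by
    rw [Int.negOnePow_succ, Int.negOnePow_succ, neg_neg]
  rw [h3] at e2
  clear_value e
  -- from e2 : m y = e • α z
  have e2' : m (j + 1) y = e • α (j + 1) z := by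
    have h5 := eq_neg_of_add_eq_zero_left e2
    rw [h5, neg_smul, neg_neg]
  -- from e1 : b x = -(e • β y) - h z
  have e1' : b (j + 1 + 1) x = -(e • β (j + 1 + 1) y) - h (j + 1) z := by
    rw [eq_sub_of_add_eq (eq_neg_of_add_eq_zero_left e1)]
    abel
  -- Step 1: find z0 killing z
  obtain ⟨z0, hz0⟩ : ∃ z0 : T (j + 1 + 1), t (j + 1) z0 = z := by
    by_cases hj1 : j + 1 = 0
    · refine hinj j hj1 z e3 ⟨e • y, ?_⟩
      rw [map_zsmul, e2', smul_smul, hsq, one_smul]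
    · exact hHT j hj1 z e3
  -- Step 2: v := y - e • α z0 is a cycle
  have hv : m (j + 1) (y - e • α (j + 1 + 1) z0) = 0 := by
    rw [map_sub, map_zsmul, ← hα, hz0, e2', sub_self]
  -- Step 3: find z', y' with t z' = z and m y' = y - e • α z'
  obtain ⟨z', y', hz', hy'⟩ : ∃ (z' : T (j + 1 + 1)) (y' : M (j + 1 + 1 + 1)),
      t (j + 1) z' = z ∧ m (j + 1 + 1) y' = y - e • α (j + 1 + 1) z' := by
    by_cases hj2 : j + 1 + 1 = 0
    · have hhz : b (j + 1 + 1) (h (j + 1 + 1) z0) = - h (j + 1) z := by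
        have h5 := hh (j + 1) z0
        rw [hz0] at h5
        exact eq_neg_of_add_eq_zero_left h5
      have hwit : b (j + 1 + 1) ((-e) • x + e • h (j + 1 + 1) z0)
          = β (j + 1 + 1) (y - e • α (j + 1 + 1) z0) := by
        rw [map_add, map_zsmul, map_zsmul, e1', hhz, map_sub, map_zsmul,
          hβα, smul_zero, sub_zero]
        match_scalars <;> first | ring1 | linear_combination hsq
      obtain ⟨zc, yc, hzc, hyc⟩ := hexact (j + 1) hj2 (y - e • α (j + 1 + 1) z0) hv
        ⟨(-e) • x + e • h (j + 1 + 1) z0, hwit⟩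
      refine ⟨z0 + e • zc, yc, ?_, ?_⟩
      · rw [map_add, map_zsmul, hzc, smul_zero, add_zero, hz0]
      · have h6 : m (j + 1 + 1) yc
            = y - e • α (j + 1 + 1) z0 - α (j + 1 + 1) zc := by
          rw [hyc]; abel
        rw [h6, map_add, map_zsmul, smul_add, smul_smul, hsq, one_smul]
        abel
    · obtain ⟨y', hy'⟩ := hHM (j + 1) hj2 _ hv
      exact ⟨z0, y', hz0, hy'⟩
  -- Step 4: find x'
  have hw : b (j + 1 + 1) (x + e • β (j + 1 + 1 + 1) y' - h (j + 1 + 1) z') = 0 := by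
    have hby' : b (j + 1 + 1) (β (j + 1 + 1 + 1) y') = β (j + 1 + 1) y := by
      rw [← hβ, hy', map_sub, map_zsmul, hβα, smul_zero, sub_zero]
    have hhz : b (j + 1 + 1) (h (j + 1 + 1) z') = - h (j + 1) z := by
      have h5 := hh (j + 1) z'
      rw [hz'] at h5
      exact eq_neg_of_add_eq_zero_left h5
    rw [map_sub, map_add, map_zsmul, e1', hby', hhz]
    abel
  obtain ⟨x', hx'⟩ := hHB (j + 1 + 1) hj _ hw
  refine ⟨x', y', z', ?_, ?_, hz'⟩
  · rw [h3, hx', neg_smul]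
    abel
  · rw [h4, hy']
    abel
end
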